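/- Finite-sample cancellation identity for the one-step estimator (equation (2) of the paper): Let n ≥ 1, let (y_i, a_i, w_i) ∈ ℝ × ℝ × 𝒲 for i = 1, …, n, let μ : ℝ × 𝒲 → ℝ be any function and g : ℝ × 𝒲 → ℝ any nowhere-zero function, and fix a₀ ∈ ℝ. Define F_n(a₀) := (1/n) Σ_{i=1}^n 1{a_i ≤ a₀}, θ_n(a) := (1/n) Σ_{j=1}^n μ(a, w_j), γ_n := (1/n²) Σ_{i,j=1}^n μ(a_i, w_j), Ω_n^{plug}(a₀) := (1/n²) Σ_{i,j=1}^n [1{a_i ≤ a₀} − F_n(a₀)] μ(a_i, w_j), and D*_n(y, a, w) := [1{a ≤ a₀} − F_n(a₀)]·[(y − μ(a,w))/g(a,w) + θ_n(a) − γ_n] + (1/n) Σ_{j=1}^n [1{a_j ≤ a₀} − F_n(a₀)] μ(a_j, w) − 2·Ω_n^{plug}(a₀). Then Ω_n^{plug}(a₀) + (1/n) Σ_{i=1}^n D*_n(y_i, a_i, w_i) = (1/n) Σ_{i=1}^n [1{a_i ≤ a₀} − F_n(a₀)]·[(y_i − μ(a_i, w_i))/g(a_i, w_i) + (1/n) Σ_{j=1}^n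 μ(a_i, w_j)]. -/

import Mathlib

open Finset

/-- Indicator `1{a ≤ a₀}`. -/
noncomputable def indLe (a₀ a : ℝ) : ℝ := if a ≤ a₀ then 1 else 0

/-- Empirical CDF `F_n(a₀)`. -/
noncomputable def empCdf (n : ℕ) (a : Fin n → ℝ) (a₀ : ℝ) : ℝ :=
  (n : ℝ)⁻¹ * ∑ i, indLe a₀ (a i)

/-- `θ_n(x) := (1/n) Σ_j μ(x, w_j)`. -/
noncomputable def thetaN {𝒲 : Type*} (n : ℕ) (w : Fin n → 𝒲) (μ : ℝ → 𝒲 → ℝ) (x : ℝ) : ℝ :=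
  (n : ℝ)⁻¹ * ∑ j, μ x (w j)

/-- `γ_n := (1/n²) Σ_{i,j} μ(a_i, w_j)`. -/
noncomputable def gammaN {𝒲 : Type*} (n : ℕ) (a : Fin n → ℝ) (w : Fin n → 𝒲)
    (μ : ℝ → 𝒲 → ℝ) : ℝ :=
  ((n : ℝ) ^ 2)⁻¹ * ∑ i, ∑ j, μ (a i) (w j)

/-- Plug-in estimator `Ω_n^{plug}(a₀)`. -/
noncomputable def omegaPlug {𝒲 : Type*} (n : ℕ) (a : Fin n → ℝ) (w : Fin n → 𝒲)
    (μ : ℝ → 𝒲 → ℝ) (a₀ : ℝ) : ℝ :=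
  ((n : ℝ) ^ 2)⁻¹ * ∑ i, ∑ j, (indLe a₀ (a i) - empCdf n a a₀) * μ (a i) (w j)

/-- Estimated influence function `D*_n(y, x, v)`. -/
noncomputable def DstarN {𝒲 : Type*} (n : ℕ) (a : Fin n → ℝ) (w : Fin n → 𝒲)
    (μ g : ℝ → 𝒲 → ℝ) (a₀ y x : ℝ) (v : 𝒲) : ℝ :=
  (indLe a₀ x - empCdf n a a₀)
      * ((y - μ x v) / g x v + thetaN n w μ x - gammaN n a w μ)
    + (n : ℝ)⁻¹ * ∑ j, (indLe a₀ (a j) - empCdf n a a₀) * μ (a j) v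
    - 2 * omegaPlug n a w μ a₀

/-! The centred indicators `1{aᵢ ≤ a₀} - F_n(a₀)` sum to zero, so the `γ_n` term of `D*_n` averages
out; after swapping the double sum, the average of the cross term of `D*_n` is `Ω_n^{plug}(a₀)`
again, and `Ω + Ω - 2Ω` cancels, leaving the residual and `θ_n` terms. -/

theorem Finset.sum_sub_inv_card_mul_sum {ι K : Type*} [Fintype ι] [DivisionRing K] [CharZero K]
    (f : ι → K) : ∑ i, (f i - (Fintype.card ι : K)⁻¹ * ∑ j, f j) = 0 := by
  rcases isEmpty_or_nonempty ι with _ | _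
  · simp
  rw [sum_sub_distrib, sum_const, card_univ, nsmul_eq_mul, mul_inv_cancel_left₀ (by simp), sub_self]

section OneStep

variable {𝒲 : Type*} {n : ℕ} (a : Fin n → ℝ) (w : Fin n → 𝒲) (μ : ℝ → 𝒲 → ℝ) (a₀ : ℝ)

theorem sum_indLe_sub_empCdf : ∑ i, (indLe a₀ (a i) - empCdf n a a₀) = 0 := by
  unfold empCdf
  simpa only [Fintype.card_fin] using Finset.sum_sub_inv_card_mul_sum fun i => indLe a₀ (a i)

theorem omegaPlug_eq_sum_comm :
    omegaPlug n a w μ a₀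
      = (n : ℝ)⁻¹ * ∑ i, (n : ℝ)⁻¹ * ∑ j, (indLe a₀ (a j) - empCdf n a a₀) * μ (a j) (w i) := by
  rw [omegaPlug, ← mul_sum, sum_comm, ← mul_assoc, ← mul_inv, sq]

theorem sum_DstarN (y : Fin n → ℝ) (g : ℝ → 𝒲 → ℝ) :
    ∑ i, DstarN n a w μ g a₀ (y i) (a i) (w i)
      = ∑ i, (indLe a₀ (a i) - empCdf n a a₀)
          * ((y i - μ (a i) (w i)) / g (a i) (w i) + thetaN n w μ (a i))
        + ∑ i, (n : ℝ)⁻¹ * ∑ j, (indLe a₀ (a j) - empCdf n a a₀) * μ (a j) (w i)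
        - n * (2 * omegaPlug n a w μ a₀) := by
  have hγ : ∑ i, (indLe a₀ (a i) - empCdf n a a₀) * gammaN n a w μ = 0 := by
    rw [← sum_mul, sum_indLe_sub_empCdf, zero_mul]
  simp only [DstarN, mul_add, mul_sub, sum_add_distrib, sum_sub_distrib, hγ, sum_const,
    card_univ, Fintype.card_fin, nsmul_eq_mul]
  ring

end OneStep

theorem one_step_cancellation_identity_general
    {𝒲 : Type*} (n : ℕ) (y a : Fin n → ℝ) (w : Fin n → 𝒲)
    (μ : ℝ → 𝒲 → ℝ) (g : ℝ → 𝒲 → ℝ) (a₀ : ℝ) :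
    omegaPlug n a w μ a₀ + (n : ℝ)⁻¹ * ∑ i, DstarN n a w μ g a₀ (y i) (a i) (w i)
      = (n : ℝ)⁻¹ * ∑ i, (indLe a₀ (a i) - empCdf n a a₀)
          * ((y i - μ (a i) (w i)) / g (a i) (w i)
            + (n : ℝ)⁻¹ * ∑ j, μ (a i) (w j)) := by
  obtain rfl | hn := eq_or_ne n 0
  · simp [omegaPlug]
  rw [sum_DstarN, mul_sub, mul_add, ← omegaPlug_eq_sum_comm, inv_mul_cancel_left₀ (by simpa)]
  simp only [thetaN]
  ring

/-- Finite-sample cancellation identity for the one-step estimator (equation (2)). -/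
theorem one_step_cancellation_identity
    {𝒲 : Type*} (n : ℕ) (hn : 1 ≤ n) (y a : Fin n → ℝ) (w : Fin n → 𝒲)
    (μ : ℝ → 𝒲 → ℝ) (g : ℝ → 𝒲 → ℝ) (hg : ∀ x v, g x v ≠ 0) (a₀ : ℝ) :
    omegaPlug n a w μ a₀ + (n : ℝ)⁻¹ * ∑ i, DstarN n a w μ g a₀ (y i) (a i) (w i)
      = (n : ℝ)⁻¹ * ∑ i, (indLe a₀ (a i) - empCdf n a a₀)
          * ((y i - μ (a i) (w i)) / g (a i) (w i)
            + (n : ℝ)⁻¹ * ∑ j, μ (a i) (w j)) :=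
  one_step_cancellation_identity_general n y a w μ g a₀
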